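/- Let Q(x,y,z) = x²y + xy² + x²z + y²z + (3−r)xyz + 2xz² + 2yz² + z³ for a real parameter r. If r ≠ 0 and r² − 11r − 1 ≠ 0 (i.e., r ≠ (11 ± 5√5)/2), then the projective curve Q = 0 is nonsingular: there is no nonzero (x,y,z) ∈ ℝ³ with Q(x,y,z) = 0 and ∇Q(x,y,z) = 0. -/

import Mathlib

/-- The homogenization of `(x+1)(y+1)(x+y+1) - rxy`. -/
def Qh (r x y z : ℝ) : ℝ :=
  x ^ 2 * y + x * y ^ 2 + x ^ 2 * z + y ^ 2 * z + (3 - r) * x * y * z +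
    2 * x * z ^ 2 + 2 * y * z ^ 2 + z ^ 3

lemma deriv_quad (a b c x : ℝ) :
    deriv (fun t : ℝ => a * t ^ 2 + b * t + c) x = 2 * a * x + b := by
  have h : HasDerivAt (fun t : ℝ => a * t ^ 2 + b * t + c) (2 * a * x + b) x := by
    have h1 : HasDerivAt (fun t : ℝ => t ^ 2) (2 * x) x := by
      simpa using hasDerivAt_pow 2 x
    have h2 := ((h1.const_mul a).add ((hasDerivAt_id x).const_mul b)).add_const c
    exact h2.congr_deriv (by ring)
  exact h.deriv

lemma deriv_cubic (a b c d x : ℝ) :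
    deriv (fun t : ℝ => a * t ^ 3 + b * t ^ 2 + c * t + d) x
      = 3 * a * x ^ 2 + 2 * b * x + c := by
  have h : HasDerivAt (fun t : ℝ => a * t ^ 3 + b * t ^ 2 + c * t + d)
      (3 * a * x ^ 2 + 2 * b * x + c) x := by
    have h1 : HasDerivAt (fun t : ℝ => t ^ 3) (3 * x ^ 2) x := by
      simpa using hasDerivAt_pow 3 x
    have h2 : HasDerivAt (fun t : ℝ => t ^ 2) (2 * x) x := by
      simpa using hasDerivAt_pow 2 x
    have h3 := (((h1.const_mul a).add (h2.const_mul b)).add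
      ((hasDerivAt_id x).const_mul c)).add_const d
    exact h3.congr_deriv (by ring)
  exact h.deriv

/-- For `r ≠ 0` and `r² - 11r - 1 ≠ 0` the projective cubic `Q = 0` is nonsingular. -/
theorem stmt3 (r : ℝ) (hr : r ≠ 0) (hr' : r ^ 2 - 11 * r - 1 ≠ 0)
    (x y z : ℝ) (hne : (x, y, z) ≠ (0, 0, 0))
    (hQ : Qh r x y z = 0)
    (hQx : deriv (fun t => Qh r t y z) x = 0)
    (hQy : deriv (fun t => Qh r x t z) y = 0)
    (hQz : deriv (fun t => Qh r x y t) z = 0) : False := by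
  have ex : (fun t : ℝ => Qh r t y z) = fun t : ℝ =>
      (y + z) * t ^ 2 + (y ^ 2 + (3 - r) * y * z + 2 * z ^ 2) * t
        + (y ^ 2 * z + 2 * y * z ^ 2 + z ^ 3) := by
    funext t; unfold Qh; ring
  have ey : (fun t : ℝ => Qh r x t z) = fun t : ℝ =>
      (x + z) * t ^ 2 + (x ^ 2 + (3 - r) * x * z + 2 * z ^ 2) * t
        + (x ^ 2 * z + 2 * x * z ^ 2 + z ^ 3) := by
    funext t; unfold Qh; ring
  have ez : (fun t : ℝ => Qh r x y t) = fun t : ℝ =>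
      (1 : ℝ) * t ^ 3 + (2 * x + 2 * y) * t ^ 2
        + (x ^ 2 + y ^ 2 + (3 - r) * x * y) * t + (x ^ 2 * y + x * y ^ 2) := by
    funext t; unfold Qh; ring
  rw [ex, deriv_quad] at hQx
  rw [ey, deriv_quad] at hQy
  rw [ez, deriv_cubic] at hQz
  -- hQx : 2*(y+z)*x + (y^2 + (3-r)*y*z + 2*z^2) = 0
  -- hQy : 2*(x+z)*y + (x^2 + (3-r)*x*z + 2*z^2) = 0
  -- hQz : 3*1*z^2 + 2*(2x+2y)*z + (x^2+y^2+(3-r)*x*y) = 0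
  have hfac : (x - y) * ((r - 1) * z - (x + y)) = 0 := by
    linear_combination hQx - hQy
  rcases mul_eq_zero.mp hfac with hxy | hsz
  · -- case x = y
    have hxy' : x = y := sub_eq_zero.mp hxy
    subst hxy'
    have e1 : 3 * x ^ 2 + (5 - r) * x * z + 2 * z ^ 2 = 0 := by
      linear_combination hQx
    have e2 : (5 - r) * x ^ 2 + 8 * x * z + 3 * z ^ 2 = 0 := by
      linear_combination hQz
    by_cases hz0 : z = 0
    · have hx0 : x = 0 := by
        have : x ^ 2 = 0 := by linear_combination (1/3) * e1 - ((5-r)*x/3 + (2/3)*z) * (by simpa using hz0 : z = 0) - 0 * e2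
        exact (pow_eq_zero_iff (n := 2) (by norm_num)).mp this
      exact hne (by simp [hx0, hz0])
    · by_cases hx0 : x = 0
      · have : z ^ 2 = 0 := by
          have := e1
          rw [hx0] at this
          linarith [this]
        exact hz0 ((pow_eq_zero_iff (n := 2) (by norm_num)).mp this)
      · have f1 : z * ((2 * r - 1) * z - (r ^ 2 - 10 * r + 1) * x) = 0 := by
          linear_combination 3 * e2 - (5 - r) * e1
        have f2 : x * ((2 * r - 1) * x - (3 * r + 1) * z) = 0 := by
          linear_combination 3 * e1 - 2 * e2
        have eq1 : (2 * r - 1) * z - (r ^ 2 - 10 * r + 1) * x = 0 :=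
          (mul_eq_zero.mp f1).resolve_left hz0
        have eq2 : (2 * r - 1) * x - (3 * r + 1) * z = 0 :=
          (mul_eq_zero.mp f2).resolve_left hx0
        have key : (3 * r * (r ^ 2 - 11 * r - 1)) * z = 0 := by
          linear_combination (-(2 * r - 1)) * eq1 - (r ^ 2 - 10 * r + 1) * eq2
        rcases mul_eq_zero.mp key with h | h
        · rcases mul_eq_zero.mp h with h | h
          · rcases mul_eq_zero.mp h with h | h
            · norm_num at h
            · exact hr h
          · exact hr' h
        · exact hz0 h
  · -- case (r-1) z = x + y
    have hz2 : (r - 1) * z = x + y := by linarith [sub_eq_zero.mp hsz]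
    by_cases hr1 : r = 1
    · subst hr1
      have hs : x + y = 0 := by linarith [hz2]
      have hz0 : z = 0 := by
        have h3 : 3 * z ^ 2 = 0 := by linear_combination hQz - (x + y + 4 * z) * hs
        have : z ^ 2 = 0 := by linarith
        exact (pow_eq_zero_iff (n := 2) (by norm_num)).mp this
      have hx0 : x = 0 := by
        have : x ^ 2 = 0 := by
          linear_combination -hQx + (x + y) * hs + (2 * x + 2 * y + 2 * z) * hz0
        exact (pow_eq_zero_iff (n := 2) (by norm_num)).mp this
      have hy0 : y = 0 := by linarith
      exact hne (by simp [hx0, hy0, hz0])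
    · have hA : 4 * r * (x + y) ^ 2 + 2 * (r - 1) ^ 2 * (x * y) = 0 := by
        linear_combination (r - 1) ^ 2 * hQx + (r - 1) ^ 2 * hQy
          - ((5 - r) * (r - 1) * (x + y) + 4 * ((r - 1) * z + (x + y))) * hz2
      have hB : r * (r + 2) * (x + y) ^ 2 - (r - 1) ^ 3 * (x * y) = 0 := by
        linear_combination (r - 1) ^ 2 * hQz
          - (4 * (r - 1) * (x + y) + 3 * ((r - 1) * z + (x + y))) * hz2
      have h6 : 6 * r ^ 2 * (x + y) ^ 2 = 0 := by
        linear_combination (r - 1) * hA + 2 * hB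
      have hs : x + y = 0 := by
        have hr2 : (0 : ℝ) < r ^ 2 := by positivity
        have h7 : (x + y) ^ 2 = 0 := by
          by_contra hc
          have : (x + y) ^ 2 > 0 := lt_of_le_of_ne (sq_nonneg _) (Ne.symm hc)
          nlinarith
        exact (pow_eq_zero_iff (n := 2) (by norm_num)).mp h7
      have hp : x * y = 0 := by
        have h7 : 2 * (r - 1) ^ 2 * (x * y) = 0 := by
          linear_combination hA - 4 * r * (x + y) * hs
        have h8 : (r - 1) ^ 2 ≠ 0 := pow_ne_zero 2 (sub_ne_zero.mpr hr1)
        have := mul_eq_zero.mp h7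
        rcases this with h | h
        · exfalso; rcases mul_eq_zero.mp h with h | h
          · norm_num at h
          · exact h8 h
        · exact h
      have hx0 : x = 0 := by
        have : x ^ 2 = 0 := by linear_combination x * hs - hp
        exact (pow_eq_zero_iff (n := 2) (by norm_num)).mp this
      have hy0 : y = 0 := by linarith
      have hz0 : z = 0 := by
        have h9 : (r - 1) * z = 0 := by rw [hz2, hx0, hy0]; ring
        exact (mul_eq_zero.mp h9).resolve_left (sub_ne_zero.mpr hr1)
      exact hne (by simp [hx0, hy0, hz0])
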